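/- arXiv:2003.06565 — 6 statements merged into one kernel-verified Lean document; each statement's English description precedes it below -/
import Mathlib

section
/- Let V be a 4-dimensional real vector space with two nondegenerate alternating bilinear forms ω₁, ω₂, and let A be the connecting automorphism (ω₁(u, Av) = ω₂(u, v)). Suppose A has no real eigenvalue. If W ⊆ V is a 2-dimensional subspace that is isotropic for both ω₁ and ω₂, then A(W) = W. -/
/-!
A `2`-dimensional subspace `W` isotropic for the nondegenerate form `ω₁` on a `4`-dimensional
space is Lagrangian: `W ≤ W^⊥` and both have dimension `2`, so `W^⊥ = W`. For `w ∈ W` and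
`u ∈ W` we have `ω₁ u (A w) = ω₂ u w = 0`, i.e. `A w ∈ W^⊥ = W`; hence `A(W) ⊆ W`, with
equality by dimension.
-/

open Module
open LinearMap (BilinForm)

namespace LinearMap.BilinForm

variable {K V : Type*} [Field K] [AddCommGroup V] [Module K V]

theorem orthogonal_eq_self_of_isotropic [FiniteDimensional K V] {B : BilinForm K V}
    (hB : B.Nondegenerate) {W : Submodule K V} (hiso : ∀ u ∈ W, ∀ v ∈ W, B u v = 0)
    (hW : 2 * finrank K W = finrank K V) : B.orthogonal W = W := by
  have hle : W ≤ B.orthogonal W := fun w hw u hu => hiso u hu w hw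
  refine (Submodule.eq_of_le_of_finrank_le hle ?_).symm
  rw [finrank_orthogonal hB]
  omega

theorem map_le_orthogonal_of_isotropic {B₁ B₂ : BilinForm K V} {A : V →ₗ[K] V}
    (hA : ∀ u v, B₁ u (A v) = B₂ u v) {W : Submodule K V}
    (hiso : ∀ u ∈ W, ∀ v ∈ W, B₂ u v = 0) : W.map A ≤ B₁.orthogonal W := by
  rintro _ ⟨w, hw, rfl⟩ u hu
  rw [hA]
  exact hiso u hu w hw

end LinearMap.BilinForm

open LinearMap.BilinForm in
theorem stmt_3_general (V : Type*) [AddCommGroup V] [Module ℝ V] [FiniteDimensional ℝ V]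
    (hdim : Module.finrank ℝ V = 4)
    (ω₁ ω₂ : V →ₗ[ℝ] V →ₗ[ℝ] ℝ)
    (h₁nd : LinearMap.BilinForm.Nondegenerate ω₁)
    (A : V ≃ₗ[ℝ] V) (hA : ∀ u v, ω₁ u (A v) = ω₂ u v)
    (W : Submodule ℝ V) (hW : Module.finrank ℝ W = 2)
    (hiso₁ : ∀ u ∈ W, ∀ v ∈ W, ω₁ u v = 0)
    (hiso₂ : ∀ u ∈ W, ∀ v ∈ W, ω₂ u v = 0) :
    W.map (A : V →ₗ[ℝ] V) = W := by
  have hlagr : orthogonal ω₁ W = W :=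
    orthogonal_eq_self_of_isotropic h₁nd hiso₁ (by rw [hW, hdim])
  have hle : W.map (A : V →ₗ[ℝ] V) ≤ W :=
    hlagr.le.trans' (map_le_orthogonal_of_isotropic hA hiso₂)
  exact Submodule.eq_of_le_of_finrank_eq hle (LinearEquiv.finrank_map_eq A W)

/-- In a 4-dimensional space, a 2-dimensional subspace isotropic for
both nondegenerate alternating forms is invariant under the connecting automorphism
`A` (which has no real eigenvalue). -/
theorem stmt_3 (V : Type*) [AddCommGroup V] [Module ℝ V] [FiniteDimensional ℝ V]
    (hdim : Module.finrank ℝ V = 4)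
    (ω₁ ω₂ : V →ₗ[ℝ] V →ₗ[ℝ] ℝ)
    (h₁alt : ∀ v, ω₁ v v = 0) (h₂alt : ∀ v, ω₂ v v = 0)
    (h₁nd : LinearMap.BilinForm.Nondegenerate ω₁)
    (h₂nd : LinearMap.BilinForm.Nondegenerate ω₂)
    (A : V ≃ₗ[ℝ] V) (hA : ∀ u v, ω₁ u (A v) = ω₂ u v)
    (hAeig : ∀ (c : ℝ) (v : V), A v = c • v → v = 0)
    (W : Submodule ℝ V) (hW : Module.finrank ℝ W = 2)
    (hiso₁ : ∀ u ∈ W, ∀ v ∈ W, ω₁ u v = 0)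
    (hiso₂ : ∀ u ∈ W, ∀ v ∈ W, ω₂ u v = 0) :
    W.map (A : V →ₗ[ℝ] V) = W :=
  stmt_3_general V hdim ω₁ ω₂ h₁nd A hA W hW hiso₁ hiso₂
end

section
/- Let V be a 4-dimensional real vector space with two nondegenerate alternating bilinear forms ω₁, ω₂ and connecting automorphism A having no real eigenvalue. If W is a 2-dimensional subspace of V isotropic for both forms, then W^{⊥₁} ∩ W^{⊥₂} = W. -/
open Module

/-! By the dimension formula `dim W^{⊥₁} = dim V - dim W = dim W` for the nondegenerate form `ω₁`,
the isotropic subspace `W ≤ W^{⊥₁}` equals `W^{⊥₁}`; hence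
`W^{⊥₁} ∩ W^{⊥₂} = W ∩ W^{⊥₂} = W`, as `W` is also `ω₂`-isotropic. -/

theorem LinearMap.BilinForm.le_orthogonal_of_isotropic {K V : Type*} [Field K] [AddCommGroup V]
    [Module K V] {B : LinearMap.BilinForm K V} {W : Submodule K V}
    (hiso : ∀ u ∈ W, ∀ v ∈ W, B u v = 0) : W ≤ B.orthogonal W :=
  fun v hv u hu => hiso u hu v hv

theorem LinearMap.BilinForm.orthogonal_eq_self_of_isotropic_s4 {K V : Type*} [Field K]
    [AddCommGroup V] [Module K V] [FiniteDimensional K V] {B : LinearMap.BilinForm K V}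
    (hB : B.Nondegenerate) {W : Submodule K V} (hW : finrank K V = 2 * finrank K W)
    (hiso : ∀ u ∈ W, ∀ v ∈ W, B u v = 0) : B.orthogonal W = W := by
  refine (Submodule.eq_of_le_of_finrank_le (le_orthogonal_of_isotropic hiso) ?_).symm
  rw [finrank_orthogonal hB W]
  omega

theorem stmt_4_general (V : Type*) [AddCommGroup V] [Module ℝ V] [FiniteDimensional ℝ V]
    (hdim : Module.finrank ℝ V = 4)
    (ω₁ ω₂ : V →ₗ[ℝ] V →ₗ[ℝ] ℝ)
    (h₁nd : LinearMap.BilinForm.Nondegenerate ω₁)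
    (W : Submodule ℝ V) (hW : Module.finrank ℝ W = 2)
    (hiso₁ : ∀ u ∈ W, ∀ v ∈ W, ω₁ u v = 0)
    (hiso₂ : ∀ u ∈ W, ∀ v ∈ W, ω₂ u v = 0) :
    LinearMap.BilinForm.orthogonal ω₁ W ⊓ LinearMap.BilinForm.orthogonal ω₂ W = W := by
  rw [LinearMap.BilinForm.orthogonal_eq_self_of_isotropic_s4 h₁nd (by omega) hiso₁]
  exact inf_eq_left.mpr (LinearMap.BilinForm.le_orthogonal_of_isotropic hiso₂)

/-- In a 4-dimensional space with connecting automorphism `A` without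
real eigenvalues, a 2-dimensional common isotropic subspace `W` satisfies
`W^{⊥₁} ∩ W^{⊥₂} = W`. -/
theorem stmt_4 (V : Type*) [AddCommGroup V] [Module ℝ V] [FiniteDimensional ℝ V]
    (hdim : Module.finrank ℝ V = 4)
    (ω₁ ω₂ : V →ₗ[ℝ] V →ₗ[ℝ] ℝ)
    (h₁alt : ∀ v, ω₁ v v = 0) (h₂alt : ∀ v, ω₂ v v = 0)
    (h₁nd : LinearMap.BilinForm.Nondegenerate ω₁)
    (h₂nd : LinearMap.BilinForm.Nondegenerate ω₂)
    (A : V ≃ₗ[ℝ] V) (hA : ∀ u v, ω₁ u (A v) = ω₂ u v)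
    (hAeig : ∀ (c : ℝ) (v : V), A v = c • v → v = 0)
    (W : Submodule ℝ V) (hW : Module.finrank ℝ W = 2)
    (hiso₁ : ∀ u ∈ W, ∀ v ∈ W, ω₁ u v = 0)
    (hiso₂ : ∀ u ∈ W, ∀ v ∈ W, ω₂ u v = 0) :
    LinearMap.BilinForm.orthogonal ω₁ W ⊓ LinearMap.BilinForm.orthogonal ω₂ W = W :=
  stmt_4_general V hdim ω₁ ω₂ h₁nd W hW hiso₁ hiso₂
end

section
/- Let V be a finite-dimensional real vector space with two nondegenerate alternating bilinear forms ω₁, ω₂ and connecting automorphism A (ω₁(u, Av) = ω₂(u, v)). Then the following are equivalent: (i) for every nonzero v ∈ V, the map u ↦ (ω₁(v,u), ω₂(v,u)) from V to ℝ² is surjective; (ii) A has no real eigenvalue. -/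
/-!
Since `ω₂ v = ω₁ v ∘ A`, the map `u ↦ (ω₁ v u, ω₂ v u)` is onto `ℝ²` exactly when the functionals
`ω₁ v` and `ω₁ v ∘ A` are linearly independent. A relation `a • ω₁ v + b • ω₁ v ∘ A = 0` says that
`ω₁ v` vanishes on the range of `a + b A`, which is all of `V` when `A` has no real eigenvalue, so
nondegeneracy forces `v = 0`. Conversely, for an eigenvector `A v = c v` skew-symmetry gives
`ω₂ v = c • ω₁ v`, so the image lies on a line.
-/

open LinearMap Module

theorem LinearMap.surjective_prod_iff_linearIndependent {K V : Type*} [Field K] [AddCommGroup V]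
    [Module K V] (f g : Dual K V) :
    Function.Surjective (f.prod g) ↔ LinearIndependent K ![f, g] := by
  rw [LinearIndependent.pair_iff]
  constructor
  · intro hsurj s t hst
    obtain ⟨u₁, hf₁, hg₁⟩ : ∃ u, f u = 1 ∧ g u = 0 := by simpa using hsurj (1, 0)
    obtain ⟨u₂, hf₂, hg₂⟩ : ∃ u, f u = 0 ∧ g u = 1 := by simpa using hsurj (0, 1)
    have h₁ : s * f u₁ + t * g u₁ = 0 := congr($hst u₁)
    have h₂ : s * f u₂ + t * g u₂ = 0 := congr($hst u₂)
    exact ⟨by simpa [hf₁, hg₁] using h₁, by simpa [hf₂, hg₂] using h₂⟩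
  · intro hind
    rw [← dualMap_injective_iff, injective_iff_map_eq_zero]
    intro ψ hψ
    have hcomb : ψ (1, 0) • f + ψ (0, 1) • g = 0 := by
      ext u
      have hu : ψ (f u, g u) = 0 := congr($hψ u)
      rw [show ((f u, g u) : K × K) = f u • (1, 0) + g u • (0, 1) by simp, map_add, map_smul,
        map_smul] at hu
      simpa [mul_comm] using hu
    obtain ⟨h₁, h₂⟩ := hind _ _ hcomb
    exact prod_ext (ext_ring h₁) (ext_ring h₂)

namespace Module.End

variable {K V : Type*} [Field K] [AddCommGroup V] [Module K V]

theorem injective_smul_add_smul (A : End K V) (hA : ∀ (c : K) (v : V), A v = c • v → v = 0)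
    {a b : K} (hab : a ≠ 0 ∨ b ≠ 0) : Function.Injective ⇑(a • 1 + b • A : End K V) := by
  rw [injective_iff_map_eq_zero]
  intro u hu
  simp only [LinearMap.add_apply, LinearMap.smul_apply, one_apply] at hu
  by_cases hb : b = 0
  · simp only [hb, zero_smul, add_zero] at hu
    exact (smul_eq_zero.mp hu).resolve_left (hab.resolve_right (not_not.mpr hb))
  · refine hA (-(a / b)) u ?_
    rw [neg_smul, eq_neg_iff_add_eq_zero, ← smul_right_inj hb, smul_add, smul_smul,
      mul_div_cancel₀ a hb, add_comm, hu, smul_zero]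

theorem linearIndependent_pair_comp [FiniteDimensional K V] (A : End K V)
    (hA : ∀ (c : K) (v : V), A v = c • v → v = 0) {φ : Dual K V} (hφ : φ ≠ 0) :
    LinearIndependent K ![φ, φ ∘ₗ A] := by
  rw [LinearIndependent.pair_iff]
  intro s t hst
  by_contra hst₀
  have hsurj := injective_iff_surjective.mp
    (injective_smul_add_smul A hA (not_and_or.mp hst₀))
  refine hφ (ext fun w ↦ ?_)
  obtain ⟨u, rfl⟩ := hsurj w
  simpa using congr($hst u)

end Module.End

theorem LinearMap.IsAlt.apply_eq_smul_of_apply_eq_smul {R M : Type*} [CommRing R]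
    [AddCommGroup M] [Module R M] {ω₁ ω₂ : M →ₗ[R] M →ₗ[R] R} (h₁ : IsAlt ω₁) (h₂ : IsAlt ω₂)
    {A : M →ₗ[R] M} (hA : ∀ u v, ω₁ u (A v) = ω₂ u v) {c : R} {v : M} (hv : A v = c • v) :
    ω₂ v = c • ω₁ v := by
  ext u
  calc ω₂ v u = -ω₂ u v := (h₂.neg u v).symm
    _ = -(c * ω₁ u v) := by rw [← hA, hv, map_smul, smul_eq_mul]
    _ = c * ω₁ v u := by rw [← h₁.neg u v]; ring

theorem stmt_7_general (V : Type*) [AddCommGroup V] [Module ℝ V] [FiniteDimensional ℝ V]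
    (ω₁ ω₂ : V →ₗ[ℝ] V →ₗ[ℝ] ℝ)
    (h₁alt : ∀ v, ω₁ v v = 0) (h₂alt : ∀ v, ω₂ v v = 0)
    (h₁nd : LinearMap.BilinForm.Nondegenerate ω₁)
    (A : V ≃ₗ[ℝ] V) (hA : ∀ u v, ω₁ u (A v) = ω₂ u v) :
    (∀ v : V, v ≠ 0 → Function.Surjective (fun u : V => ((ω₁ v u, ω₂ v u) : ℝ × ℝ))) ↔
      (∀ (c : ℝ) (v : V), A v = c • v → v = 0) := by
  change (∀ v : V, v ≠ 0 → Function.Surjective ((ω₁ v).prod (ω₂ v))) ↔ _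
  simp only [surjective_prod_iff_linearIndependent]
  constructor
  · intro hind c v hv
    by_contra hv₀
    have hω₂ := LinearMap.IsAlt.apply_eq_smul_of_apply_eq_smul h₁alt h₂alt hA hv
    have := LinearIndependent.pair_iff.mp (hind v hv₀) c (-1) (by rw [hω₂]; module)
    norm_num at this
  · intro hA' v hv₀
    have hω₂ : ω₂ v = ω₁ v ∘ₗ (A : V →ₗ[ℝ] V) := ext fun u ↦ (hA v u).symm
    have hω₁ : ω₁ v ≠ 0 := fun h ↦ hv₀ (h₁nd.1 v fun w ↦ by rw [h, LinearMap.zero_apply])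
    rw [hω₂]
    exact Module.End.linearIndependent_pair_comp (A : V →ₗ[ℝ] V) hA' hω₁

/-- Fatness criterion: for every nonzero `v` the map
`u ↦ (ω₁ v u, ω₂ v u)` is surjective onto `ℝ²` iff the connecting automorphism `A`
has no real eigenvalue. -/
theorem stmt_7 (V : Type*) [AddCommGroup V] [Module ℝ V] [FiniteDimensional ℝ V]
    (ω₁ ω₂ : V →ₗ[ℝ] V →ₗ[ℝ] ℝ)
    (h₁alt : ∀ v, ω₁ v v = 0) (h₂alt : ∀ v, ω₂ v v = 0)
    (h₁nd : LinearMap.BilinForm.Nondegenerate ω₁)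
    (h₂nd : LinearMap.BilinForm.Nondegenerate ω₂)
    (A : V ≃ₗ[ℝ] V) (hA : ∀ u v, ω₁ u (A v) = ω₂ u v) :
    (∀ v : V, v ≠ 0 → Function.Surjective (fun u : V => ((ω₁ v u, ω₂ v u) : ℝ × ℝ))) ↔
      (∀ (c : ℝ) (v : V), A v = c • v → v = 0) :=
  stmt_7_general V ω₁ ω₂ h₁alt h₂alt h₁nd A hA
end

section
/- On ℝ⁶ with coordinates as above, let D = ker α₁ ∩ ker α₂ with α₁ = dz₁ - (y₁₁ dx₁₁ - y₁₂ dx₁₂), α₂ = dz₂ - (y₁₂ dx₁₁ + y₁₁ dx₁₂), and let ωᵢ = dαᵢ|_D. The connecting automorphism A : D → D defined by ω₁(u, Av) = ω₂(u, v) satisfies A² = -Id on D. -/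
/-- `α₁ = dz₁ - (y₁₁ dx₁₁ - y₁₂ dx₁₂)` at `m ∈ ℝ⁶`; coordinates
`(x₁₁, x₁₂, y₁₁, y₁₂, z₁, z₂)`. -/
noncomputable def alpha1 (m : Fin 6 → ℝ) : (Fin 6 → ℝ) →ₗ[ℝ] ℝ :=
  (LinearMap.proj 4 : (Fin 6 → ℝ) →ₗ[ℝ] ℝ) -
    (m 2 • (LinearMap.proj 0 : (Fin 6 → ℝ) →ₗ[ℝ] ℝ) -
      m 3 • (LinearMap.proj 1 : (Fin 6 → ℝ) →ₗ[ℝ] ℝ))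

/-- `α₂ = dz₂ - (y₁₂ dx₁₁ + y₁₁ dx₁₂)` at `m ∈ ℝ⁶`. -/
noncomputable def alpha2 (m : Fin 6 → ℝ) : (Fin 6 → ℝ) →ₗ[ℝ] ℝ :=
  (LinearMap.proj 5 : (Fin 6 → ℝ) →ₗ[ℝ] ℝ) -
    (m 3 • (LinearMap.proj 0 : (Fin 6 → ℝ) →ₗ[ℝ] ℝ) +
      m 2 • (LinearMap.proj 1 : (Fin 6 → ℝ) →ₗ[ℝ] ℝ))

/-- `dα₁ = -(dy₁₁ ∧ dx₁₁ - dy₁₂ ∧ dx₁₂)`. -/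
def dalpha1 (u v : Fin 6 → ℝ) : ℝ :=
  -((u 2 * v 0 - u 0 * v 2) - (u 3 * v 1 - u 1 * v 3))

/-- `dα₂ = -(dy₁₂ ∧ dx₁₁ + dy₁₁ ∧ dx₁₂)`. -/
def dalpha2 (u v : Fin 6 → ℝ) : ℝ :=
  -((u 3 * v 0 - u 0 * v 3) + (u 2 * v 1 - u 1 * v 2))

/-! Testing the defining identity of `A` against the frame `X₁, X₂, Y₁, Y₂` of `D` shows that `A`
acts on the horizontal coordinates `(x₁₁, x₁₂, y₁₁, y₁₂)` as the standard complex structure, whose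
square is `-1`; and a vector of `D` is determined by its horizontal coordinates. -/

noncomputable abbrev distributionFiber (m : Fin 6 → ℝ) : Submodule ℝ (Fin 6 → ℝ) :=
  LinearMap.ker (alpha1 m) ⊓ LinearMap.ker (alpha2 m)

theorem mem_distributionFiber_iff {m u : Fin 6 → ℝ} :
    u ∈ distributionFiber m ↔
      u 4 = m 2 * u 0 - m 3 * u 1 ∧ u 5 = m 3 * u 0 + m 2 * u 1 := by
  simp only [Submodule.mem_inf, LinearMap.mem_ker, alpha1, alpha2, LinearMap.sub_apply,
    LinearMap.add_apply, LinearMap.smul_apply, LinearMap.proj_apply, smul_eq_mul, sub_eq_zero]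

theorem distributionFiber_ext {m : Fin 6 → ℝ} {u v : distributionFiber m}
    (h0 : (u : Fin 6 → ℝ) 0 = (v : Fin 6 → ℝ) 0) (h1 : (u : Fin 6 → ℝ) 1 = (v : Fin 6 → ℝ) 1)
    (h2 : (u : Fin 6 → ℝ) 2 = (v : Fin 6 → ℝ) 2) (h3 : (u : Fin 6 → ℝ) 3 = (v : Fin 6 → ℝ) 3) :
    u = v := by
  obtain ⟨hu4, hu5⟩ := mem_distributionFiber_iff.mp u.2
  obtain ⟨hv4, hv5⟩ := mem_distributionFiber_iff.mp v.2
  ext i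
  fin_cases i
  · exact h0
  · exact h1
  · exact h2
  · exact h3
  · simp only [Fin.reduceFinMk, Fin.isValue, hu4, hv4, h0, h1]
  · simp only [Fin.reduceFinMk, Fin.isValue, hu5, hv5, h0, h1]

section Frame

variable (m : Fin 6 → ℝ)

def frameX₁ : distributionFiber m :=
  ⟨![1, 0, 0, 0, m 2, m 3], mem_distributionFiber_iff.mpr (by simp)⟩

def frameX₂ : distributionFiber m :=
  ⟨![0, 1, 0, 0, -m 3, m 2], mem_distributionFiber_iff.mpr (by simp)⟩

def frameY₁ : distributionFiber m :=
  ⟨![0, 0, 1, 0, 0, 0], mem_distributionFiber_iff.mpr (by simp)⟩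

def frameY₂ : distributionFiber m :=
  ⟨![0, 0, 0, 1, 0, 0], mem_distributionFiber_iff.mpr (by simp)⟩

end Frame

theorem connecting_apply_coords {m : Fin 6 → ℝ}
    {A : distributionFiber m →ₗ[ℝ] distributionFiber m}
    (hA : ∀ u v : distributionFiber m,
      dalpha1 (u : Fin 6 → ℝ) (A v : Fin 6 → ℝ) = dalpha2 (u : Fin 6 → ℝ) (v : Fin 6 → ℝ))
    (v : distributionFiber m) :
    (A v : Fin 6 → ℝ) 0 = (v : Fin 6 → ℝ) 1 ∧ (A v : Fin 6 → ℝ) 1 = -(v : Fin 6 → ℝ) 0 ∧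
      (A v : Fin 6 → ℝ) 2 = (v : Fin 6 → ℝ) 3 ∧ (A v : Fin 6 → ℝ) 3 = -(v : Fin 6 → ℝ) 2 := by
  have hY₁ := hA (frameY₁ m) v
  have hY₂ := hA (frameY₂ m) v
  have hX₁ := hA (frameX₁ m) v
  have hX₂ := hA (frameX₂ m) v
  simp only [frameX₁, frameX₂, frameY₁, frameY₂, dalpha1, dalpha2, Matrix.cons_val_zero,
    Matrix.cons_val_one, Matrix.cons_val_two, Matrix.cons_val_three, Matrix.head_cons,
    Matrix.tail_cons] at hY₁ hY₂ hX₁ hX₂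
  exact ⟨by linarith, by linarith, by linarith, by linarith⟩

/-- The connecting automorphism `A` of the fiber
`D_m = ker α₁ ∩ ker α₂`, characterized by `ω₁(u, A v) = ω₂(u, v)` with
`ωᵢ = dαᵢ|_D`, satisfies `A² = -Id` on `D_m`. -/
theorem stmt_13 (m : Fin 6 → ℝ)
    (A : ↥(LinearMap.ker (alpha1 m) ⊓ LinearMap.ker (alpha2 m)) →ₗ[ℝ]
      ↥(LinearMap.ker (alpha1 m) ⊓ LinearMap.ker (alpha2 m)))
    (hA : ∀ u v : ↥(LinearMap.ker (alpha1 m) ⊓ LinearMap.ker (alpha2 m)),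
      dalpha1 (u : Fin 6 → ℝ) ((A v : Fin 6 → ℝ)) = dalpha2 (u : Fin 6 → ℝ) (v : Fin 6 → ℝ)) :
    ∀ v, A (A v) = -v := by
  intro v
  obtain ⟨a0, a1, a2, a3⟩ := connecting_apply_coords hA v
  obtain ⟨b0, b1, b2, b3⟩ := connecting_apply_coords hA (A v)
  apply distributionFiber_ext <;>
    simp only [Submodule.coe_neg, Pi.neg_apply, b0, b1, b2, b3, a0, a1, a2, a3]
end

section
/- On ℝ⁶, the distribution D = ker α₁ ∩ ker α₂ with α₁ = dz₁ - (y₁₁ dx₁₁ - y₁₂ dx₁₂), α₂ = dz₂ - (y₁₂ dx₁₁ + y₁₁ dx₁₂) is fat: for every point and every nonzero v in the fiber D_x, the linear map D_x → ℝ², u ↦ (dα₁(v, u), dα₂(v, u)), is surjective. -/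
/-
Writing `x = x₁₁ + i x₁₂`, `y = y₁₁ + i y₁₂`, `z = z₁ + i z₂`, the forms are the real and imaginary
parts of the complex contact form `dz - y dx`, and `(dα₁ + i dα₂)(v, u) = v_x u_y - v_y u_x` is
complex bilinear. A vector of `D` is determined by its `(x, y)` part, which can be chosen freely, and a
nonzero `v ∈ D` has `(v_x, v_y) ≠ 0`, so `u ↦ v_x u_y - v_y u_x` is onto `ℂ`.
-/

def xCoord (u : Fin 6 → ℝ) : ℂ := ⟨u 0, u 1⟩

def yCoord (u : Fin 6 → ℝ) : ℂ := ⟨u 2, u 3⟩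

lemma dalpha_eq_xCoord_mul_yCoord_sub (v u : Fin 6 → ℝ) :
    (⟨dalpha1 v u, dalpha2 v u⟩ : ℂ) = xCoord v * yCoord u - yCoord v * xCoord u := by
  apply Complex.ext <;>
  · simp only [dalpha1, dalpha2, xCoord, yCoord, Complex.sub_re, Complex.sub_im, Complex.mul_re,
      Complex.mul_im]
    ring

lemma alpha1_apply (m u : Fin 6 → ℝ) : alpha1 m u = u 4 - (m 2 * u 0 - m 3 * u 1) := rfl

lemma alpha2_apply (m u : Fin 6 → ℝ) : alpha2 m u = u 5 - (m 3 * u 0 + m 2 * u 1) := rfl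

def horizontalLift (m : Fin 6 → ℝ) (p q : ℂ) : Fin 6 → ℝ :=
  ![p.re, p.im, q.re, q.im, m 2 * p.re - m 3 * p.im, m 3 * p.re + m 2 * p.im]

lemma horizontalLift_mem (m : Fin 6 → ℝ) (p q : ℂ) :
    horizontalLift m p q ∈ LinearMap.ker (alpha1 m) ⊓ LinearMap.ker (alpha2 m) := by
  constructor <;> simp [alpha1_apply, alpha2_apply, horizontalLift]

lemma xCoord_horizontalLift (m : Fin 6 → ℝ) (p q : ℂ) : xCoord (horizontalLift m p q) = p := rfl

lemma yCoord_horizontalLift (m : Fin 6 → ℝ) (p q : ℂ) : yCoord (horizontalLift m p q) = q := rfl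

lemma eq_zero_of_xCoord_eq_zero_of_yCoord_eq_zero {m v : Fin 6 → ℝ}
    (hv : v ∈ LinearMap.ker (alpha1 m) ⊓ LinearMap.ker (alpha2 m))
    (hx : xCoord v = 0) (hy : yCoord v = 0) : v = 0 := by
  have h1 : alpha1 m v = 0 := hv.1
  have h2 : alpha2 m v = 0 := hv.2
  rw [alpha1_apply] at h1
  rw [alpha2_apply] at h2
  simp only [xCoord, yCoord, Complex.ext_iff, Complex.zero_re, Complex.zero_im] at hx hy
  ext i
  fin_cases i <;> simp_all

lemma exists_mul_sub_mul_eq {K : Type*} [Field K] {a b : K} (h : a ≠ 0 ∨ b ≠ 0) (w : K) :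
    ∃ p q : K, a * q - b * p = w := by
  rcases h with ha | hb
  · exact ⟨0, w / a, by field_simp; ring⟩
  · exact ⟨-(w / b), 0, by field_simp; ring⟩

/-- The distribution `D = ker α₁ ∩ ker α₂` on `ℝ⁶` is fat: for every
point `m` and every nonzero `v` in the fiber `D_m`, the map
`u ↦ (dα₁(v, u), dα₂(v, u))` from `D_m` to `ℝ²` is surjective. -/
theorem stmt_14 (m : Fin 6 → ℝ)
    (v : ↥(LinearMap.ker (alpha1 m) ⊓ LinearMap.ker (alpha2 m))) (hv : v ≠ 0) :
    Function.Surjective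
      (fun u : ↥(LinearMap.ker (alpha1 m) ⊓ LinearMap.ker (alpha2 m)) =>
        ((dalpha1 (v : Fin 6 → ℝ) (u : Fin 6 → ℝ),
          dalpha2 (v : Fin 6 → ℝ) (u : Fin 6 → ℝ)) : ℝ × ℝ)) := by
  rintro ⟨a, b⟩
  have hxy : xCoord v ≠ 0 ∨ yCoord v ≠ 0 := by
    by_contra! h
    exact hv (Subtype.ext (eq_zero_of_xCoord_eq_zero_of_yCoord_eq_zero v.2 h.1 h.2))
  obtain ⟨p, q, hpq⟩ := exists_mul_sub_mul_eq hxy ⟨a, b⟩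
  refine ⟨⟨horizontalLift m p q, horizontalLift_mem m p q⟩, ?_⟩
  have hd := dalpha_eq_xCoord_mul_yCoord_sub v (horizontalLift m p q)
  rw [xCoord_horizontalLift, yCoord_horizontalLift, hpq, Complex.ext_iff] at hd
  exact Prod.ext hd.1 hd.2
end

section
/- Let V be a finite-dimensional real vector space with two nondegenerate alternating bilinear forms ω₁, ω₂ and connecting automorphism A having no real eigenvalue. Then for every (c₁, c₂) ∈ ℝ² with (c₁, c₂) ≠ (0, 0), the alternating form c₁ω₁ + c₂ω₂ is nondegenerate on V. -/
theorem LinearMap.Nondegenerate.compl₂_linearEquiv {R M M₁ M₂ M₂' : Type*} [CommSemiring R]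
    [AddCommMonoid M] [Module R M] [AddCommMonoid M₁] [Module R M₁] [AddCommMonoid M₂]
    [Module R M₂] [AddCommMonoid M₂'] [Module R M₂'] {B : M₁ →ₗ[R] M₂ →ₗ[R] M}
    (hB : B.Nondegenerate) (e : M₂' ≃ₗ[R] M₂) : (B.compl₂ (e : M₂' →ₗ[R] M₂)).Nondegenerate := by
  refine ⟨fun x hx => hB.1 x fun y => ?_, fun y hy => e.map_eq_zero_iff.mp (hB.2 _ hy)⟩
  simpa using hx (e.symm y)

theorem Module.End.injective_smul_one_add_smul {K V : Type*} [Field K] [AddCommGroup V]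
    [Module K V] {A : Module.End K V} (hA : ∀ (c : K) (v : V), A v = c • v → v = 0)
    {c₁ c₂ : K} (hc : (c₁, c₂) ≠ (0, 0)) :
    Function.Injective (c₁ • (1 : Module.End K V) + c₂ • A) := by
  refine (injective_iff_map_eq_zero _).mpr fun v hv => ?_
  replace hv : c₁ • v + c₂ • A v = 0 := by simpa using hv
  by_cases hc₂ : c₂ = 0
  · have hc₁ : c₁ ≠ 0 := fun hc₁ => hc (by simp [hc₁, hc₂])
    simpa [hc₂, hc₁] using hv
  · refine hA (-c₁ / c₂) v ?_
    rw [div_eq_inv_mul, mul_smul, eq_inv_smul_iff₀ hc₂, neg_smul]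
    exact eq_neg_of_add_eq_zero_left (by rwa [add_comm])

theorem stmt_15_general (V : Type*) [AddCommGroup V] [Module ℝ V] [FiniteDimensional ℝ V]
    (ω₁ ω₂ : V →ₗ[ℝ] V →ₗ[ℝ] ℝ)
    (h₁nd : LinearMap.BilinForm.Nondegenerate ω₁)
    (A : V ≃ₗ[ℝ] V) (hA : ∀ u v, ω₁ u (A v) = ω₂ u v)
    (hAeig : ∀ (c : ℝ) (v : V), A v = c • v → v = 0)
    (c₁ c₂ : ℝ) (hc : (c₁, c₂) ≠ (0, 0)) :
    LinearMap.BilinForm.Nondegenerate (c₁ • ω₁ + c₂ • ω₂) := by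
  set f : Module.End ℝ V := c₁ • 1 + c₂ • (A : Module.End ℝ V)
  have hf : Function.Injective f := Module.End.injective_smul_one_add_smul hAeig hc
  have hω : c₁ • ω₁ + c₂ • ω₂ = ω₁.compl₂ f := by
    ext u v
    simp [f, hA]
  rw [hω]
  exact h₁nd.compl₂_linearEquiv (LinearEquiv.ofInjectiveEndo f hf)

/-- If the connecting automorphism `A` (with `ω₁ u (A v) = ω₂ u v`)
has no real eigenvalue, then every nonzero linear combination `c₁ω₁ + c₂ω₂` is
nondegenerate. -/
theorem stmt_15 (V : Type*) [AddCommGroup V] [Module ℝ V] [FiniteDimensional ℝ V]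
    (ω₁ ω₂ : V →ₗ[ℝ] V →ₗ[ℝ] ℝ)
    (h₁alt : ∀ v, ω₁ v v = 0) (h₂alt : ∀ v, ω₂ v v = 0)
    (h₁nd : LinearMap.BilinForm.Nondegenerate ω₁)
    (h₂nd : LinearMap.BilinForm.Nondegenerate ω₂)
    (A : V ≃ₗ[ℝ] V) (hA : ∀ u v, ω₁ u (A v) = ω₂ u v)
    (hAeig : ∀ (c : ℝ) (v : V), A v = c • v → v = 0)
    (c₁ c₂ : ℝ) (hc : (c₁, c₂) ≠ (0, 0)) :
    LinearMap.BilinForm.Nondegenerate (c₁ • ω₁ + c₂ • ω₂) :=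
  stmt_15_general V ω₁ ω₂ h₁nd A hA hAeig c₁ c₂ hc
end
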